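/- arXiv:1912.09560 — 2 statements merged into one kernel-verified Lean document; each statement's English description precedes it below -/
import Mathlib

section
/- Moments of the GLMGA distribution: for all σ > 0, a > 0, b > 0 and every real r > 0 with rσ < 1/2, ∫_0^∞ y^r f_{σ,a,b}(y) dy = (2b)^{-σr} · B(1/2 − rσ, a + rσ) / B(1/2, a). -/
/-!
The substitution `y = u ^ (-σ)` turns the moment into the Beta integral of the second kind
`∫₀^∞ u ^ (p - 1) / (u + 2b) ^ (p + q) du` with `p = 1/2 - rσ` and `q = a + rσ`, and the
substitution `t = u / (u + c)` identifies `∫₀^∞ u ^ (p - 1) / (u + c) ^ (p + q) du` with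
`c ^ (-q) B(p, q)`.
-/

open MeasureTheory Real Filter Topology

/-- The (real) beta function `B(m,n) = ∫_0^1 t^(m-1) (1-t)^(n-1) dt`. -/
noncomputable def betaFn (m n : ℝ) : ℝ :=
  ∫ t in (0:ℝ)..1, t ^ (m - 1) * (1 - t) ^ (n - 1)

/-- The regularized incomplete beta function `I_{m,n}(v)`. -/
noncomputable def regIncBeta (m n v : ℝ) : ℝ :=
  (∫ t in (0:ℝ)..v, t ^ (m - 1) * (1 - t) ^ (n - 1)) / betaFn m n

/-- The GLMGA density `f_{σ,a,b}`. -/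
noncomputable def glmga (σ a b y : ℝ) : ℝ :=
  (2 * b) ^ a / (σ * betaFn a (1 / 2)) * y ^ (-(1 / (2 * σ) + 1))
    / (y ^ (-1 / σ) + 2 * b) ^ (a + 1 / 2)

theorem betaFn_comm (m n : ℝ) : betaFn m n = betaFn n m := by
  have h := intervalIntegral.integral_comp_sub_left
    (fun t : ℝ => t ^ (n - 1) * (1 - t) ^ (m - 1)) (a := 0) (b := 1) 1
  simp only [sub_sub_cancel, sub_zero, sub_self] at h
  rw [betaFn, betaFn, ← h]
  exact intervalIntegral.integral_congr fun x _ => mul_comm _ _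

theorem betaFn_eq_integral_Ioo (m n : ℝ) :
    betaFn m n = ∫ t in Set.Ioo (0:ℝ) 1, t ^ (m - 1) * (1 - t) ^ (n - 1) := by
  rw [betaFn, intervalIntegral.integral_of_le zero_le_one, integral_Ioc_eq_integral_Ioo]

section BetaPrime

variable {c : ℝ}

theorem image_div_add_Ioi (hc : 0 < c) : (fun u => u / (u + c)) '' Set.Ioi 0 = Set.Ioo 0 1 := by
  ext t
  simp only [Set.mem_image, Set.mem_Ioi, Set.mem_Ioo]
  constructor
  · rintro ⟨u, hu, rfl⟩
    exact ⟨by positivity, (div_lt_one (by positivity)).2 (by linarith)⟩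
  · rintro ⟨ht0, ht1⟩
    refine ⟨c * t / (1 - t), div_pos (mul_pos hc ht0) (by linarith), ?_⟩
    have : 1 - t ≠ 0 := by linarith
    field_simp
    ring

theorem strictMonoOn_div_add (hc : 0 < c) : StrictMonoOn (fun u => u / (u + c)) (Set.Ioi 0) := by
  intro u hu v hv huv
  simp only [Set.mem_Ioi] at hu hv
  rw [div_lt_div_iff₀ (by linarith) (by linarith)]
  nlinarith

theorem hasDerivAt_div_add {u : ℝ} (hu : u + c ≠ 0) :
    HasDerivAt (fun u => u / (u + c)) (c / (u + c) ^ 2) u := by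
  refine ((hasDerivAt_id' u).fun_div ((hasDerivAt_id' u).add_const c) hu).congr_deriv ?_
  ring

-- Outside `0 < p, 0 < q` both sides are junk zeros, since the change of variables also holds
-- for non-integrable functions.
theorem integral_rpow_div_add_rpow_Ioi (hc : 0 < c) (p q : ℝ) :
    ∫ u in Set.Ioi (0:ℝ), u ^ (p - 1) / (u + c) ^ (p + q) = c ^ (-q) * betaFn p q := by
  have hsub := integral_image_eq_integral_abs_deriv_smul measurableSet_Ioi
    (fun u hu => (hasDerivAt_div_add (add_pos (Set.mem_Ioi.1 hu) hc).ne').hasDerivWithinAt)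
    (strictMonoOn_div_add hc).injOn (fun t => t ^ (p - 1) * (1 - t) ^ (q - 1))
  rw [image_div_add_Ioi hc, ← betaFn_eq_integral_Ioo] at hsub
  rw [hsub, ← integral_const_mul]
  refine setIntegral_congr_fun measurableSet_Ioi fun u hu => ?_
  simp only [Set.mem_Ioi] at hu
  have hs : 0 < u + c := by linarith
  have h1 : 1 - u / (u + c) = c / (u + c) := by field_simp; ring
  simp only [smul_eq_mul, h1]
  rw [abs_of_pos (by positivity), div_rpow hu.le hs.le, div_rpow hc.le hs.le,
    rpow_sub_one hs.ne', rpow_sub_one hs.ne', rpow_sub_one hc.ne', rpow_add hs, rpow_neg hc.le]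
  field_simp

end BetaPrime

theorem glmga_comp_rpow_neg {σ : ℝ} (hσ : 0 < σ) (a b r : ℝ) {u : ℝ} (hu : 0 < u) :
    (|-σ| * u ^ (-σ - 1)) • ((u ^ (-σ)) ^ r * glmga σ a b (u ^ (-σ)))
      = (2 * b) ^ a / betaFn a (1 / 2) *
        (u ^ ((1 / 2 - r * σ) - 1) / (u + 2 * b) ^ ((1 / 2 - r * σ) + (a + r * σ))) := by
  have hinv : (u ^ (-σ)) ^ (-1 / σ) = u := by
    rw [← rpow_mul hu.le, show -σ * (-1 / σ) = 1 by field_simp, rpow_one]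
  have hpow : u ^ (-σ - 1) * ((u ^ (-σ)) ^ r * (u ^ (-σ)) ^ (-(1 / (2 * σ) + 1)))
      = u ^ ((1 / 2 - r * σ) - 1) := by
    rw [← rpow_mul hu.le, ← rpow_mul hu.le, ← rpow_add hu, ← rpow_add hu]
    congr 1
    field_simp
    ring
  rw [glmga, hinv, abs_neg, abs_of_pos hσ, smul_eq_mul, ← hpow]
  field_simp
  ring_nf

theorem glmga_moment_general (σ a b r : ℝ) (hσ : 0 < σ) (hb : 0 < b) :
    ∫ y in Set.Ioi (0:ℝ), y ^ r * glmga σ a b y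
      = (2 * b) ^ (-(σ * r)) * betaFn (1 / 2 - r * σ) (a + r * σ) / betaFn (1 / 2) a := by
  have h2b : 0 < 2 * b := by positivity
  calc ∫ y in Set.Ioi (0:ℝ), y ^ r * glmga σ a b y
      = ∫ u in Set.Ioi (0:ℝ), (|-σ| * u ^ (-σ - 1)) • ((u ^ (-σ)) ^ r * glmga σ a b (u ^ (-σ))) :=
        (integral_comp_rpow_Ioi _ (neg_ne_zero.2 hσ.ne')).symm
    _ = ∫ u in Set.Ioi (0:ℝ), (2 * b) ^ a / betaFn a (1 / 2) *
          (u ^ ((1 / 2 - r * σ) - 1) / (u + 2 * b) ^ ((1 / 2 - r * σ) + (a + r * σ))) :=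
        setIntegral_congr_fun measurableSet_Ioi fun u hu => glmga_comp_rpow_neg hσ a b r hu
    _ = (2 * b) ^ a * (2 * b) ^ (-(a + r * σ)) * betaFn (1 / 2 - r * σ) (a + r * σ)
          / betaFn a (1 / 2) := by
        rw [integral_const_mul, integral_rpow_div_add_rpow_Ioi h2b]
        ring
    _ = _ := by
        rw [← rpow_add h2b, betaFn_comm a]
        ring_nf

/-- moments of the GLMGA distribution. -/
theorem glmga_moment (σ a b r : ℝ) (hσ : 0 < σ) (ha : 0 < a) (hb : 0 < b)
    (hr : 0 < r) (hrσ : r * σ < 1 / 2) :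
    ∫ y in Set.Ioi (0:ℝ), y ^ r * glmga σ a b y
      = (2 * b) ^ (-(σ * r)) * betaFn (1 / 2 - r * σ) (a + r * σ) / betaFn (1 / 2) a :=
  glmga_moment_general σ a b r hσ hb
end

section
/- Nonexistence of high moments of the GLMGA distribution: for all σ > 0, a > 0, b > 0 and every real r > 0 with rσ ≥ 1/2, the function y ↦ y^r f_{σ,a,b}(y) is not integrable on (0,∞). -/
open MeasureTheory Real Filter Topology

/-! For `y ≥ 1` the factor `y^{-1/σ} + 2b` lies in `(2b, 1 + 2b]`, so `y^r f_{σ,a,b}(y)` is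
bounded below by a positive multiple of `y^{r - 1/(2σ) - 1}`. The condition `rσ ≥ 1/2` makes
this exponent at least `-1`, and such a power is not integrable at infinity. The constant is
positive because `B(a, 1/2) > 0`, which needs the beta integrand to be integrable: otherwise the
interval integral would be the junk value `0`. -/

open Set

lemma betaFn_integrand_intervalIntegrable {m n : ℝ} (hm : 0 < m) (hn : 0 < n) :
    IntervalIntegrable (fun t : ℝ => t ^ (m - 1) * (1 - t) ^ (n - 1)) volume 0 1 := by
  -- on `(0, 1)` the real integrand is the norm of the complex beta integrand
  refine (Complex.betaIntegral_convergent (u := m) (v := n) (by simpa) (by simpa)).norm.congr_uIoo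
    fun t ht => ?_
  rw [uIoo_of_le zero_le_one] at ht
  have h1t : (0 : ℝ) < 1 - t := sub_pos.2 ht.2
  dsimp only
  rw [norm_mul, show (1 : ℂ) - t = ((1 - t : ℝ) : ℂ) by push_cast; rfl,
    Complex.norm_cpow_eq_rpow_re_of_pos ht.1, Complex.norm_cpow_eq_rpow_re_of_pos h1t]
  simp

lemma betaFn_pos {m n : ℝ} (hm : 0 < m) (hn : 0 < n) : 0 < betaFn m n :=
  intervalIntegral.intervalIntegral_pos_of_pos_on (betaFn_integrand_intervalIntegrable hm hn)
    (fun _ ht => mul_pos (rpow_pos_of_pos ht.1 _) (rpow_pos_of_pos (by linarith [ht.2]) _))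
    one_pos

lemma betaFn_nonneg (m n : ℝ) : 0 ≤ betaFn m n :=
  intervalIntegral.integral_nonneg zero_le_one
    (fun _ ht => mul_nonneg (rpow_nonneg ht.1 _) (rpow_nonneg (by linarith [ht.2]) _))

lemma not_integrableOn_Ioi_of_rpow_le {f : ℝ → ℝ} {c p t : ℝ} (ht : 0 < t) (hc : 0 < c)
    (hp : -1 ≤ p) (hf : ∀ y ∈ Ioi t, c * y ^ p ≤ f y) : ¬ IntegrableOn f (Ioi t) := by
  intro hfi
  have hpow : IntegrableOn (fun y : ℝ => y ^ p) (Ioi t) := by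
    refine (hfi.const_mul c⁻¹).mono' (by fun_prop) ?_
    filter_upwards [ae_restrict_mem measurableSet_Ioi] with y hy
    rw [norm_of_nonneg (rpow_nonneg (ht.trans hy).le _), le_inv_mul_iff₀ hc]
    exact hf y hy
  exact (integrableOn_Ioi_rpow_iff ht).not.2 hp.not_gt hpow

lemma glmga_tail_lower_bound {σ a b y : ℝ} (hσ : 0 ≤ σ) (ha : 0 ≤ a + 1 / 2) (hb : 0 ≤ b)
    (hy : 1 ≤ y) :
    (2 * b) ^ a / (σ * betaFn a (1 / 2)) / (1 + 2 * b) ^ (a + 1 / 2) *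
      y ^ (-(1 / (2 * σ) + 1)) ≤ glmga σ a b y := by
  have hy0 : 0 < y := zero_lt_one.trans_le hy
  have hdecay : y ^ (-1 / σ) ≤ 1 :=
    rpow_le_one_of_one_le_of_nonpos hy (div_nonpos_of_nonpos_of_nonneg (by norm_num) hσ)
  have hden : (y ^ (-1 / σ) + 2 * b) ^ (a + 1 / 2) ≤ (1 + 2 * b) ^ (a + 1 / 2) :=
    rpow_le_rpow (by positivity) (by linarith) ha
  rw [glmga, div_mul_eq_mul_div]
  have hB := betaFn_nonneg a (1 / 2)
  exact div_le_div_of_nonneg_left (by positivity) (by positivity) hden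

theorem glmga_moment_not_integrable_general (σ a b r : ℝ) (hσ : 0 < σ) (ha : 0 < a) (hb : 0 < b)
    (hrσ : 1 / 2 ≤ r * σ) :
    ¬ IntegrableOn (fun y : ℝ => y ^ r * glmga σ a b y) (Set.Ioi 0) := by
  set c := (2 * b) ^ a / (σ * betaFn a (1 / 2)) / (1 + 2 * b) ^ (a + 1 / 2)
  have hc : 0 < c := by
    have hB := betaFn_pos ha one_half_pos
    positivity
  have hp : -1 ≤ r + -(1 / (2 * σ) + 1) := by
    have : 1 / (2 * σ) ≤ r := by rw [div_le_iff₀ (by positivity)]; linarith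
    linarith
  refine fun h => not_integrableOn_Ioi_of_rpow_le one_pos hc hp (fun y hy => ?_)
    (h.mono_set (Ioi_subset_Ioi zero_le_one))
  have hy0 : 0 < y := zero_lt_one.trans hy
  calc c * y ^ (r + -(1 / (2 * σ) + 1)) = y ^ r * (c * y ^ (-(1 / (2 * σ) + 1))) := by
        rw [rpow_add hy0]; ring
    _ ≤ y ^ r * glmga σ a b y := mul_le_mul_of_nonneg_left
        (glmga_tail_lower_bound hσ.le (by linarith) hb.le hy.le) (rpow_nonneg hy0.le _)

/-- nonexistence of high moments of the GLMGA distribution. -/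
theorem glmga_moment_not_integrable (σ a b r : ℝ) (hσ : 0 < σ) (ha : 0 < a) (hb : 0 < b)
    (hr : 0 < r) (hrσ : 1 / 2 ≤ r * σ) :
    ¬ IntegrableOn (fun y : ℝ => y ^ r * glmga σ a b y) (Set.Ioi 0) :=
  glmga_moment_not_integrable_general σ a b r hσ ha hb hrσ
end
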